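/- Let γ: [0,∞) → ℝ and define θ: ℝ² → ℝ² by θ(p) = R_{γ(‖p‖)}·p, where R_α = [[cos α, sin α],[−sin α, cos α]]. Let p ∈ ℝ², p ≠ 0, ρ = ‖p‖, and suppose γ is differentiable at ρ. Denote by J the counterclockwise quarter-turn matrix [[0,−1],[1,0]], and for q ≠ 0 set v(q) = q/‖q‖ (unit radial vector) and u(q) = J·q/‖q‖ (unit vector tangent to the circle through q). Then Dθ(p)(u(p)) = u(θ(p)) and Dθ(p)(v(p)) = v(θ(p)) − ρ·γ'(ρ)·u(θ(p)). Consequently, in the frames (v(p),u(p)) at p and (v(θ(p)),u(θ(p))) at θ(p), the derivative Dθ(p) is the shear matrix [[1,0],[α,1]] with α = −ρ·γ'(ρ); in particular α > 0 when γ'(ρ) < 0. -/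

import Mathlib

noncomputable section

abbrev E2 := EuclideanSpace ℝ (Fin 2)

/-- The (clockwise) rotation matrix `R_α = [[cos α, sin α], [−sin α, cos α]]`. -/
def rotM (α : ℝ) : Matrix (Fin 2) (Fin 2) ℝ :=
  !![Real.cos α, Real.sin α; -Real.sin α, Real.cos α]

/-- The rotation `R_α` acting on `ℝ²`. -/
def rot (α : ℝ) : E2 →L[ℝ] E2 := Matrix.toEuclideanCLM (𝕜 := ℝ) (rotM α)

/-- The map `θ(p) = R_{γ(‖p‖)} p`, rotating each circle centered at the
origin rigidly by the angle `γ(radius)`. -/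
def theta (γ : ℝ → ℝ) (p : E2) : E2 := rot (γ ‖p‖) p

/-- The counterclockwise quarter-turn matrix `J = [[0,−1],[1,0]]`. -/
def Jmat : Matrix (Fin 2) (Fin 2) ℝ := !![0, -1; 1, 0]

/-- The unit radial vector `v(q) = q/‖q‖`. -/
def radialVec (q : E2) : E2 := ‖q‖⁻¹ • q

/-- The unit tangent vector `u(q) = J q/‖q‖` to the circle through `q`. -/
def tangentVec (q : E2) : E2 := ‖q‖⁻¹ • (Matrix.toEuclideanCLM (𝕜 := ℝ) Jmat q)

/-! Writing `R_α = cos α • 1 - sin α • J`, one gets `d/dα R_α = -J R_α`, with `J` commuting with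
`R_α`. The product rule then gives `Dθ(p) w = R w - (γ'(ρ) ⟪p, w⟫ / ρ) • J θ(p)` with
`R = R_{γ(ρ)}`. The tangent vector `u(p)` is orthogonal to `p`, so only `R` acts on it, and
`R (J p) = J (R p)`; on the radial vector the correction term is `-ρ γ'(ρ) u(θ p)`, since rotations
preserve norms and hence `‖θ p‖ = ρ`. -/

open Real InnerProductSpace ContinuousLinearMap

lemma hasFDerivAt_norm_of_ne_zero {F : Type*} [NormedAddCommGroup F] [InnerProductSpace ℝ F]
    {x : F} (hx : x ≠ 0) : HasFDerivAt (‖·‖) (‖x‖⁻¹ • innerSL ℝ x) x := by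
  have hx' : ‖x‖ ≠ 0 := norm_ne_zero_iff.mpr hx
  have hsq := (hasStrictFDerivAt_norm_sq x).hasFDerivAt.sqrt (pow_ne_zero 2 hx')
  simp only [Real.sqrt_sq (norm_nonneg _)] at hsq
  refine hsq.congr_fderiv ?_
  ext w
  simp only [smul_apply, coe_innerSL_apply, smul_eq_mul, nsmul_eq_mul, Nat.cast_ofNat]
  field_simp

def quarterTurn : E2 →L[ℝ] E2 := Matrix.toEuclideanCLM (𝕜 := ℝ) Jmat

lemma quarterTurn_apply_zero (q : E2) : quarterTurn q 0 = -q 1 := by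
  simp [quarterTurn, Jmat, Matrix.mulVec, dotProduct, Fin.sum_univ_two]

lemma quarterTurn_apply_one (q : E2) : quarterTurn q 1 = q 0 := by
  simp [quarterTurn, Jmat, Matrix.mulVec, dotProduct, Fin.sum_univ_two]

lemma quarterTurn_quarterTurn (q : E2) : quarterTurn (quarterTurn q) = -q := by
  ext i
  fin_cases i <;> simp [quarterTurn_apply_zero, quarterTurn_apply_one]

lemma inner_self_quarterTurn (q : E2) : ⟪q, quarterTurn q⟫_ℝ = 0 := by
  simp only [PiLp.inner_apply, RCLike.inner_apply, conj_trivial, Fin.sum_univ_two,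
    quarterTurn_apply_zero, quarterTurn_apply_one]
  ring

lemma tangentVec_eq (q : E2) : tangentVec q = ‖q‖⁻¹ • quarterTurn q := rfl

lemma rot_eq (α : ℝ) : rot α = cos α • (1 : E2 →L[ℝ] E2) - sin α • quarterTurn := by
  have hM : rotM α = cos α • (1 : Matrix (Fin 2) (Fin 2) ℝ) - sin α • Jmat := by
    ext i j
    fin_cases i <;> fin_cases j <;> simp [rotM, Jmat]
  rw [rot, hM, map_sub, map_smul, map_smul, map_one]
  rfl

lemma rot_quarterTurn (α : ℝ) (q : E2) : rot α (quarterTurn q) = quarterTurn (rot α q) := by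
  simp [rot_eq]

lemma norm_rot (α : ℝ) (q : E2) : ‖rot α q‖ = ‖q‖ := by
  simp only [EuclideanSpace.norm_eq, Fin.sum_univ_two, Real.norm_eq_abs, sq_abs]
  congr 1
  simp only [rot_eq, sub_apply, smul_apply, one_apply_eq_self, PiLp.sub_apply, PiLp.smul_apply,
    smul_eq_mul, quarterTurn_apply_zero, quarterTurn_apply_one]
  linear_combination (q 0 ^ 2 + q 1 ^ 2) * sin_sq_add_cos_sq α

lemma norm_theta (γ : ℝ → ℝ) (q : E2) : ‖theta γ q‖ = ‖q‖ := norm_rot _ _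

lemma hasDerivAt_rot (α : ℝ) : HasDerivAt rot (-(quarterTurn ∘L rot α)) α := by
  have h := ((hasDerivAt_cos α).smul_const (1 : E2 →L[ℝ] E2)).sub
    ((hasDerivAt_sin α).smul_const quarterTurn)
  rw [show rot = fun β => cos β • (1 : E2 →L[ℝ] E2) - sin β • quarterTurn from funext rot_eq]
  refine h.congr_deriv ?_
  ext1 q
  simp [quarterTurn_quarterTurn]

lemma hasFDerivAt_theta {γ : ℝ → ℝ} {p : E2} (hp : p ≠ 0) {d : ℝ} (hγ : HasDerivAt γ d ‖p‖) :
    HasFDerivAt (theta γ)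
      (rot (γ ‖p‖) - (d / ‖p‖) • (innerSL ℝ p).smulRight (quarterTurn (theta γ p))) p := by
  have hangle := (hasDerivAt_rot (γ ‖p‖)).hasFDerivAt.comp p
    (hγ.comp_hasFDerivAt p (hasFDerivAt_norm_of_ne_zero hp))
  refine (hangle.clm_apply (hasFDerivAt_id p)).congr_fderiv ?_
  ext1 w
  simp only [theta, Function.comp_apply, id_eq, comp_id, comp_smulₛₗ, flip_smul, flip_apply,
    comp_apply, toSpanSingleton_apply, coe_innerSL_apply, smulRight_apply, add_apply, sub_apply,
    smul_apply, neg_apply, smul_neg, ringHom_apply, map_inv₀]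
  module

/-- **The shear formula for `Dθ` in the radial/tangent frames.**
For `p ≠ 0`, `ρ = ‖p‖` and `γ` differentiable at `ρ` with `γ'(ρ) = d`,
the map `θ(p) = R_{γ(‖p‖)} p` is differentiable at `p` with
`Dθ(p) u(p) = u(θ p)` and `Dθ(p) v(p) = v(θ p) − ρ·γ'(ρ)·u(θ p)`;
i.e. in the frames `(v, u)` the derivative is the shear `[[1,0],[α,1]]`
with `α = −ρ·γ'(ρ)`. -/
theorem fderiv_theta_shear_formula
    (γ : ℝ → ℝ) (p : E2) (hp : p ≠ 0) (d : ℝ)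
    (hγ : HasDerivAt γ d ‖p‖) :
    DifferentiableAt ℝ (theta γ) p ∧
      fderiv ℝ (theta γ) p (tangentVec p) = tangentVec (theta γ p) ∧
      fderiv ℝ (theta γ) p (radialVec p) =
        radialVec (theta γ p) - (‖p‖ * d) • tangentVec (theta γ p) := by
  have hθ := hasFDerivAt_theta hp hγ
  have hρ : ‖p‖ ≠ 0 := norm_ne_zero_iff.mpr hp
  refine ⟨hθ.differentiableAt, ?_, ?_⟩
  · rw [hθ.fderiv, tangentVec_eq, tangentVec_eq, norm_theta]
    simp [inner_self_quarterTurn, rot_quarterTurn, theta]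
  · rw [hθ.fderiv, tangentVec_eq, radialVec, radialVec, norm_theta]
    simp only [theta, map_smul, sub_apply, smul_apply, smulRight_apply, coe_innerSL_apply,
      real_inner_self_eq_norm_sq]
    match_scalars <;> field_simp

end
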